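/- Suppose f ∈ C₁ satisfies ∫₀¹ f dλ = 1, and set M = 2^{d+1}. Then for every x ∈ (1/2,1] and every j ∈ Σ one has f(y_j(x))/(1+(α_j+1)ξ_j(x)) ≤ M and f(z(x)) ≤ M. -/

import Mathlib

open MeasureTheory Set

/-- Left branch of the LSV-type maps: `x ↦ x(1 + 2^α x^α)`. -/
noncomputable def lsvLeft (α x : ℝ) : ℝ := x * (1 + 2 ^ α * x ^ α)

/-- The LSV map `S_α`. -/
noncomputable def lsvMap (α : ℝ) (x : ℝ) : ℝ :=
  if x ≤ 1 / 2 then lsvLeft α x else 2 * x - 1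

/-- The map `R_{α,K}`. -/
noncomputable def rMap (α K : ℝ) (x : ℝ) : ℝ :=
  if x ≤ 1 / 2 then lsvLeft α x
  else 1 / 2 + K * (x - 1 / 2) + 2 * (1 - K) * (x - 1 / 2) ^ 2

/-- The Perron–Frobenius operator `P` of the random system, written in terms of
the inverse `y j` of the left branch of `T j`, the inverse `zr r` of the right
branch of `T r` (for `r ∈ SR`), and `z(x) = (x+1)/2`.  Here
`ξ_j(x) = (2 y_j(x))^{α_j}` and `DR_r(u) = K_r + 4(1-K_r)(u - 1/2)`. -/
noncomputable def PFop {N : ℕ} (SR : Finset (Fin N)) (p α K : Fin N → ℝ)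
    (y zr : Fin N → ℝ → ℝ) (f : ℝ → ℝ) (x : ℝ) : ℝ :=
  (∑ j, p j * (f (y j x) / (1 + (α j + 1) * (2 * y j x) ^ (α j))))
    + (∑ j ∈ SRᶜ, p j) * (f ((x + 1) / 2) / 2)
    + if 1 / 2 < x then
        ∑ r ∈ SR, p r * (f (zr r x) / (K r + 4 * (1 - K r) * (zr r x - 1 / 2)))
      else 0

/-- Membership of the set `C₀`: nonnegative, decreasing and continuous on
`(0,1/2]` and on `(1/2,1]`, and Lebesgue integrable. -/
def memC0 (f : ℝ → ℝ) : Prop :=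
  (∀ x ∈ Set.Ioc (0 : ℝ) 1, 0 ≤ f x) ∧
  AntitoneOn f (Set.Ioc (0 : ℝ) (1 / 2)) ∧
  ContinuousOn f (Set.Ioc (0 : ℝ) (1 / 2)) ∧
  AntitoneOn f (Set.Ioc (1 / 2 : ℝ) 1) ∧
  ContinuousOn f (Set.Ioc (1 / 2 : ℝ) 1) ∧
  MeasureTheory.IntegrableOn f (Set.Ioc (0 : ℝ) 1)


/-- Membership of the set `C₁`: member of `C₀` such that `x ↦ x^d f(x)` is
increasing on `(0,1/2]` and `x ↦ (x-1/2)^d f(x)` is increasing on `(1/2,1]`. -/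
def memC1 (d : ℝ) (f : ℝ → ℝ) : Prop :=
  memC0 f ∧
  MonotoneOn (fun x => x ^ d * f x) (Set.Ioc (0 : ℝ) (1 / 2)) ∧
  MonotoneOn (fun x => (x - 1 / 2) ^ d * f x) (Set.Ioc (1 / 2 : ℝ) 1)

/-- Membership of the set `C₂(a₁,a₂,β)` (with `t₁ = α_min + 1 - β`,
`t₂ = 1 - β`): member of `C₁` with `f(x) ≤ a₁ x^{-t₁}` on `(0,1/2]`,
`f(x) ≤ a₂ (x-1/2)^{-t₂}` on `(1/2,1]` and `∫₀¹ f dλ = 1`. -/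
def memC2 (d t₁ t₂ a₁ a₂ : ℝ) (f : ℝ → ℝ) : Prop :=
  memC1 d f ∧
  (∀ x ∈ Set.Ioc (0 : ℝ) (1 / 2), f x ≤ a₁ * x ^ (-t₁)) ∧
  (∀ x ∈ Set.Ioc (1 / 2 : ℝ) 1, f x ≤ a₂ * (x - 1 / 2) ^ (-t₂)) ∧
  ∫ x in Set.Ioc (0 : ℝ) 1, f x = 1

lemma memC0_mul_le_one_left (f : ℝ → ℝ) (hf : memC0 f)
    (hint : ∫ x in Set.Ioc (0 : ℝ) 1, f x = 1) :
    ∀ u ∈ Set.Ioc (0 : ℝ) (1 / 2), u * f u ≤ 1 := by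
  obtain ⟨hpos, hanti, -, -, -, hInt⟩ := hf
  intro u hu
  have hsub : Set.Ioc (0 : ℝ) u ⊆ Set.Ioc 0 1 :=
    Set.Ioc_subset_Ioc le_rfl (by linarith [hu.2])
  have hIu : MeasureTheory.IntegrableOn f (Set.Ioc 0 u) := hInt.mono_set hsub
  have step1 : u * f u = ∫ _ in Set.Ioc (0 : ℝ) u, f u := by
    rw [setIntegral_const, measureReal_def, Real.volume_Ioc, smul_eq_mul,
      ENNReal.toReal_ofReal (by linarith [hu.1])]
    ring_nf
  have step2 : ∫ _ in Set.Ioc (0 : ℝ) u, f u ≤ ∫ x in Set.Ioc (0 : ℝ) u, f x := by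
    refine setIntegral_mono_on (integrableOn_const (lt_top_iff_ne_top.1 ?_)) hIu
      measurableSet_Ioc (fun x hx => hanti ⟨hx.1, le_trans hx.2 hu.2⟩ hu hx.2)
    rw [Real.volume_Ioc]; exact ENNReal.ofReal_lt_top
  have step3 : ∫ x in Set.Ioc (0 : ℝ) u, f x ≤ ∫ x in Set.Ioc (0 : ℝ) 1, f x := by
    refine setIntegral_mono_set hInt ?_ (HasSubset.Subset.eventuallyLE hsub)
    exact (ae_restrict_iff' measurableSet_Ioc).2 (Filter.Eventually.of_forall hpos)
  linarith [step1, step2, step3, hint]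

lemma memC0_mul_le_one_right (f : ℝ → ℝ) (hf : memC0 f)
    (hint : ∫ x in Set.Ioc (0 : ℝ) 1, f x = 1) :
    ∀ v ∈ Set.Ioc (1 / 2 : ℝ) 1, (v - 1 / 2) * f v ≤ 1 := by
  obtain ⟨hpos, -, -, hanti, -, hInt⟩ := hf
  intro v hv
  have hsub : Set.Ioc (1 / 2 : ℝ) v ⊆ Set.Ioc 0 1 :=
    Set.Ioc_subset_Ioc (by norm_num) hv.2
  have hIu : MeasureTheory.IntegrableOn f (Set.Ioc (1 / 2 : ℝ) v) := hInt.mono_set hsub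
  have step1 : (v - 1 / 2) * f v = ∫ _ in Set.Ioc (1 / 2 : ℝ) v, f v := by
    rw [setIntegral_const, measureReal_def, Real.volume_Ioc, smul_eq_mul,
      ENNReal.toReal_ofReal (by linarith [hv.1])]
  have step2 : ∫ _ in Set.Ioc (1 / 2 : ℝ) v, f v ≤ ∫ x in Set.Ioc (1 / 2 : ℝ) v, f x := by
    refine setIntegral_mono_on (integrableOn_const (lt_top_iff_ne_top.1 ?_)) hIu
      measurableSet_Ioc (fun x hx => hanti ⟨hx.1, le_trans hx.2 hv.2⟩ hv hx.2)
    rw [Real.volume_Ioc]; exact ENNReal.ofReal_lt_top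
  have step3 : ∫ x in Set.Ioc (1 / 2 : ℝ) v, f x ≤ ∫ x in Set.Ioc (0 : ℝ) 1, f x := by
    refine setIntegral_mono_set hInt ?_ (HasSubset.Subset.eventuallyLE hsub)
    exact (ae_restrict_iff' measurableSet_Ioc).2 (Filter.Eventually.of_forall hpos)
  linarith [step1, step2, step3, hint]

/-- Estimates (3.18)/(3.19): for `f ∈ C₁` with `∫₀¹ f dλ = 1` and `M = 2^{d+1}`,
for every `x ∈ (1/2,1]` and `j ∈ Σ` one has
`f(y_j(x))/(1+(α_j+1)ξ_j(x)) ≤ M` and `f(z(x)) ≤ M`. -/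
theorem memC1_uniform_bounds
    (N : ℕ) (hN : 0 < N)
    (α K : Fin N → ℝ) (SR : Finset (Fin N))
    (hα : ∀ j, 0 < α j)
    (hK : ∀ r ∈ SR, K r ∈ Set.Ioo (0 : ℝ) 1)
    (αmax : ℝ) (hαmax : IsGreatest (Set.range α) αmax)
    (d : ℝ) (hd : d = αmax + 2)
    (M : ℝ) (hM : M = 2 ^ (d + 1))
    (y : Fin N → ℝ → ℝ)
    (hy : ∀ j, ∀ x ∈ Set.Icc (0 : ℝ) 1,
      y j x ∈ Set.Icc (0 : ℝ) (1 / 2) ∧ lsvLeft (α j) (y j x) = x)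
    (f : ℝ → ℝ) (hf : memC1 d f)
    (hfint : ∫ x in Set.Ioc (0 : ℝ) 1, f x = 1) :
    ∀ x ∈ Set.Ioc (1 / 2 : ℝ) 1, ∀ j : Fin N,
      f (y j x) / (1 + (α j + 1) * (2 * y j x) ^ (α j)) ≤ M ∧
      f ((x + 1) / 2) ≤ M := by
  intro x hx j
  have hleft := memC0_mul_le_one_left f hf.1 hfint
  have hright := memC0_mul_le_one_right f hf.1 hfint
  -- M ≥ 4
  obtain ⟨j₀⟩ := Fin.pos_iff_nonempty.mp hN
  have hαmax_pos : 0 < αmax := lt_of_lt_of_le (hα j₀) (hαmax.2 ⟨j₀, rfl⟩)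
  have hM4 : (4 : ℝ) ≤ M := by
    rw [hM]
    calc (4 : ℝ) = 2 ^ (2 : ℝ) := by
          rw [show (2 : ℝ) = ((2 : ℕ) : ℝ) by norm_num, Real.rpow_natCast]; norm_num
      _ ≤ 2 ^ (d + 1) := by
          apply Real.rpow_le_rpow_left_iff (by norm_num : (1 : ℝ) < 2) |>.2
          rw [hd]; linarith
  have hfpos := hf.1.1
  constructor
  · -- bound on f(y j x)/(…)
    obtain ⟨hyIcc, hyeq⟩ := hy j x ⟨le_of_lt (lt_trans (by norm_num) hx.1), hx.2⟩
    set u := y j x with hu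
    have hu0 : 0 ≤ u := hyIcc.1
    have hu2 : u ≤ 1 / 2 := hyIcc.2
    have hpow_le : 2 ^ (α j) * u ^ (α j) ≤ 1 := by
      rw [← Real.mul_rpow (by norm_num) hu0]
      exact Real.rpow_le_one (by linarith) (by linarith) (le_of_lt (hα j))
    have hx2 : (1 / 2 : ℝ) < u * (1 + 2 ^ (α j) * u ^ (α j)) := by
      rw [show u * (1 + 2 ^ (α j) * u ^ (α j)) = lsvLeft (α j) u from rfl, hyeq]
      exact hx.1
    have hu14 : (1 / 4 : ℝ) ≤ u := by nlinarith [hpow_le, hu0]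
    have hufu : u * f u ≤ 1 := hleft u ⟨by linarith, hu2⟩
    have hfu4 : f u ≤ 4 := by nlinarith [hfpos u ⟨by linarith, by linarith⟩]
    have hden : (1 : ℝ) ≤ 1 + (α j + 1) * (2 * u) ^ (α j) := by
      have h1 : (0 : ℝ) ≤ (2 * u) ^ (α j) := Real.rpow_nonneg (by linarith) _
      nlinarith [hα j]
    have hfu0 : 0 ≤ f u := hfpos u ⟨by linarith, by linarith⟩
    calc f u / (1 + (α j + 1) * (2 * u) ^ (α j)) ≤ f u := div_le_self hfu0 hden
      _ ≤ 4 := hfu4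
      _ ≤ M := hM4
  · -- bound on f(z x)
    set v := (x + 1) / 2 with hv
    have hv1 : v ∈ Set.Ioc (1 / 2 : ℝ) 1 := ⟨by simp only [hv]; linarith [hx.1],
      by simp only [hv]; linarith [hx.2]⟩
    have h1 : (v - 1 / 2) * f v ≤ 1 := hright v hv1
    have h2 : (1 / 4 : ℝ) < v - 1 / 2 := by simp only [hv]; linarith [hx.1]
    have hfv0 : 0 ≤ f v := hfpos v ⟨by linarith [hv1.1], hv1.2⟩
    have : f v ≤ 4 := by nlinarith
    linarith
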